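/- arXiv:2403.09932 — 2 statements merged into one kernel-verified Lean document; each statement's English description precedes it below -/
import Mathlib

section
/- Let A be an n₁ × r real matrix and B an n₂ × r real matrix. Then the coherence of the Khatri-Rao (columnwise Kronecker) product A ⊙ B satisfies μ(A ⊙ B) ≤ μ(A) · μ(B) · r. -/
open scoped BigOperators

noncomputable def colSpace {ι : Type*} [Fintype ι] [DecidableEq ι] {r : ℕ}
    (M : Matrix ι (Fin r) ℝ) : Submodule ℝ (EuclideanSpace ℝ ι) :=
  Submodule.span ℝ (Set.range fun ℓ : Fin r => (WithLp.toLp 2 (fun i => M i ℓ) : EuclideanSpace ℝ ι))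

/-- The coherence `μ(M)` of a matrix, i.e. `(n/r) · max_i ‖proj_{col(M)} e_i‖²`. -/
noncomputable def coherence {ι : Type*} [Fintype ι] [DecidableEq ι] {r : ℕ}
    (M : Matrix ι (Fin r) ℝ) : ℝ :=
  ((Fintype.card ι : ℝ) / r) *
    ⨆ i : ι, ‖(Submodule.orthogonalProjectionOnto (colSpace M) (EuclideanSpace.single i 1) :
      EuclideanSpace ℝ ι)‖ ^ 2

/-- The Khatri-Rao (columnwise Kronecker) product `A ⊙ B`. -/
def khatriRao {n₁ n₂ r : ℕ} (A : Matrix (Fin n₁) (Fin r) ℝ) (B : Matrix (Fin n₂) (Fin r) ℝ) :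
    Matrix (Fin n₁ × Fin n₂) (Fin r) ℝ :=
  fun p ℓ => A p.1 ℓ * B p.2 ℓ

lemma mem_orthogonal_span_of {E : Type*} [NormedAddCommGroup E] [InnerProductSpace ℝ E]
    {s : Set E} {v : E} (h : ∀ u ∈ s, inner (𝕜 := ℝ) u v = 0) :
    v ∈ (Submodule.span ℝ s)ᗮ := by
  rw [Submodule.mem_orthogonal]
  intro u hu
  induction hu using Submodule.span_induction with
  | mem x hx => exact h x hx
  | zero => simp
  | add x y _ _ hx hy => rw [inner_add_left, hx, hy, add_zero]
  | smul a x _ hx => rw [inner_smul_left, hx, mul_zero]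

lemma norm_proj_le_of_sub_mem {E : Type*} [NormedAddCommGroup E]
    [InnerProductSpace ℝ E] (S : Submodule ℝ E) [S.HasOrthogonalProjection]
    {v w : E} (h : v - w ∈ Sᗮ) :
    ‖(S.orthogonalProjectionOnto v : E)‖ ≤ ‖w‖ := by
  have h1 : S.orthogonalProjectionOnto v = S.orthogonalProjectionOnto w := by
    have hz := Submodule.orthogonalProjectionOnto_apply_of_mem_orthogonal h
    have h2 : S.orthogonalProjectionOnto v - S.orthogonalProjectionOnto w = 0 := by
      rw [← map_sub, hz]
    rw [sub_eq_zero] at h2; exact h2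
  rw [h1]
  calc ‖(S.orthogonalProjectionOnto w : E)‖ = ‖S.orthogonalProjectionOnto w‖ := rfl
    _ ≤ ‖S.orthogonalProjectionOnto‖ * ‖w‖ := (S.orthogonalProjectionOnto).le_opNorm w
    _ ≤ 1 * ‖w‖ :=
        mul_le_mul_of_nonneg_right (Submodule.orthogonalProjectionOnto_norm_le S) (norm_nonneg w)
    _ = ‖w‖ := one_mul _

/-- `⟨col ℓ, P e_i⟩ = M i ℓ`. Stated as a sum. -/
lemma sum_col_proj {ι : Type*} [Fintype ι] [DecidableEq ι] {r : ℕ}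
    (M : Matrix ι (Fin r) ℝ) (i : ι) (ℓ : Fin r) :
    ∑ j, M j ℓ *
      (Submodule.orthogonalProjectionOnto (colSpace M) (EuclideanSpace.single i 1) : EuclideanSpace ℝ ι) j
      = M i ℓ := by
  set u : EuclideanSpace ℝ ι :=
    (Submodule.orthogonalProjectionOnto (colSpace M) (EuclideanSpace.single i 1) : EuclideanSpace ℝ ι) with hu
  set c : EuclideanSpace ℝ ι := (WithLp.toLp 2 (fun j => M j ℓ) : EuclideanSpace ℝ ι) with hc
  have hmem : c ∈ colSpace M := Submodule.subset_span ⟨ℓ, rfl⟩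
  have hsub : EuclideanSpace.single i (1:ℝ) - u ∈ (colSpace M)ᗮ := by
    have := Submodule.sub_starProjection_mem_orthogonal
      (K := colSpace M) (EuclideanSpace.single i 1)
    rwa [← Submodule.coe_orthogonalProjectionOnto_apply] at this
  have h0 : @inner ℝ _ _ c (EuclideanSpace.single i (1:ℝ) - u) = 0 :=
    Submodule.inner_right_of_mem_orthogonal hmem hsub
  rw [inner_sub_right, sub_eq_zero] at h0
  have h1 : @inner ℝ (EuclideanSpace ℝ ι) _ c (EuclideanSpace.single i (1:ℝ)) = M i ℓ := by
    rw [PiLp.inner_apply]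
    simp [EuclideanSpace.single_apply, RCLike.inner_apply, hc]
  have h2 : @inner ℝ (EuclideanSpace ℝ ι) _ c u = ∑ j, M j ℓ * u j := by
    rw [PiLp.inner_apply]
    simp [RCLike.inner_apply, hc]
    exact Finset.sum_congr rfl fun _ _ => mul_comm _ _
  rw [h2, h1] at h0
  linarith


theorem coherence_khatriRao_le {n₁ n₂ r : ℕ}
    (A : Matrix (Fin n₁) (Fin r) ℝ) (B : Matrix (Fin n₂) (Fin r) ℝ) :
    coherence (khatriRao A B) ≤ coherence A * coherence B * r := by
  rcases Nat.eq_zero_or_pos r with hr | hr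
  · subst hr; simp [coherence]
  rcases Nat.eq_zero_or_pos n₁ with h1 | h1
  · subst h1; simp [coherence, Real.iSup_of_isEmpty]
  rcases Nat.eq_zero_or_pos n₂ with h2 | h2
  · subst h2; simp [coherence, Real.iSup_of_isEmpty]
  set f : Fin n₁ → ℝ := fun i =>
    ‖(Submodule.orthogonalProjectionOnto (colSpace A) (EuclideanSpace.single i 1) :
      EuclideanSpace ℝ (Fin n₁))‖ ^ 2 with hfdef
  set g : Fin n₂ → ℝ := fun j =>
    ‖(Submodule.orthogonalProjectionOnto (colSpace B) (EuclideanSpace.single j 1) :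
      EuclideanSpace ℝ (Fin n₂))‖ ^ 2 with hgdef
  set h : Fin n₁ × Fin n₂ → ℝ := fun p =>
    ‖(Submodule.orthogonalProjectionOnto (colSpace (khatriRao A B)) (EuclideanSpace.single p 1) :
        EuclideanSpace ℝ (Fin n₁ × Fin n₂))‖ ^ 2 with hhdef
  have hf0 : ∀ i, 0 ≤ f i := fun i => sq_nonneg _
  have hg0 : ∀ j, 0 ≤ g j := fun j => sq_nonneg _
  have hfb : BddAbove (Set.range f) := Set.Finite.bddAbove (Set.finite_range f)
  have hgb : BddAbove (Set.range g) := Set.Finite.bddAbove (Set.finite_range g)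
  have key : ∀ p : Fin n₁ × Fin n₂, h p ≤ f p.1 * g p.2 := by
    rintro ⟨i, j⟩
    set u : EuclideanSpace ℝ (Fin n₁) :=
      (Submodule.orthogonalProjectionOnto (colSpace A) (EuclideanSpace.single i 1) :
        EuclideanSpace ℝ (Fin n₁)) with hu
    set v : EuclideanSpace ℝ (Fin n₂) :=
      (Submodule.orthogonalProjectionOnto (colSpace B) (EuclideanSpace.single j 1) :
        EuclideanSpace ℝ (Fin n₂)) with hv
    set w : EuclideanSpace ℝ (Fin n₁ × Fin n₂) := WithLp.toLp 2 (fun p => u p.1 * v p.2) with hw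
    have hperp : EuclideanSpace.single (i, j) (1:ℝ) - w ∈ (colSpace (khatriRao A B))ᗮ := by
      apply mem_orthogonal_span_of
      rintro c ⟨ℓ, rfl⟩
      rw [inner_sub_right, sub_eq_zero]
      have hA := sum_col_proj A i ℓ
      have hB := sum_col_proj B j ℓ
      have hL : @inner ℝ (EuclideanSpace ℝ (Fin n₁ × Fin n₂)) _
          (WithLp.toLp 2 (fun p => khatriRao A B p ℓ) : EuclideanSpace ℝ (Fin n₁ × Fin n₂))
          (EuclideanSpace.single (i, j) (1:ℝ)) = A i ℓ * B j ℓ := by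
        rw [PiLp.inner_apply]
        simp [EuclideanSpace.single_apply, RCLike.inner_apply, khatriRao]
      have hR : @inner ℝ (EuclideanSpace ℝ (Fin n₁ × Fin n₂)) _
          (WithLp.toLp 2 (fun p => khatriRao A B p ℓ) : EuclideanSpace ℝ (Fin n₁ × Fin n₂)) w
          = A i ℓ * B j ℓ := by
        rw [PiLp.inner_apply]
        have hs : ∑ p : Fin n₁ × Fin n₂,
            @inner ℝ ℝ _ (khatriRao A B p ℓ) (w p)
            = (∑ a : Fin n₁, A a ℓ * u a) * (∑ b : Fin n₂, B b ℓ * v b) := by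
          rw [Finset.sum_mul_sum, Fintype.sum_prod_type]
          apply Finset.sum_congr rfl; intro a _
          apply Finset.sum_congr rfl; intro b _
          simp only [khatriRao, hw, RCLike.inner_apply, starRingEnd_apply, star_trivial, PiLp.toLp_apply]
          ring
        rw [hs, hA, hB]
      rw [hL, hR]
    have hle := norm_proj_le_of_sub_mem (colSpace (khatriRao A B)) hperp
    have hwnorm : ‖w‖ = ‖u‖ * ‖v‖ := by
      have hsum : ∑ p : Fin n₁ × Fin n₂, ‖w p‖ ^ 2
          = (∑ a : Fin n₁, ‖u a‖ ^ 2) * (∑ b : Fin n₂, ‖v b‖ ^ 2) := by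
        rw [Finset.sum_mul_sum, Fintype.sum_prod_type]
        apply Finset.sum_congr rfl; intro a _
        apply Finset.sum_congr rfl; intro b _
        simp only [hw, norm_mul, PiLp.toLp_apply]
        ring
      rw [EuclideanSpace.norm_eq, EuclideanSpace.norm_eq, EuclideanSpace.norm_eq, hsum,
        Real.sqrt_mul (by positivity)]
    have hh : h (i, j) ≤ (‖u‖ * ‖v‖) ^ 2 := by
      rw [hhdef]
      exact pow_le_pow_left₀ (norm_nonneg _) (hwnorm ▸ hle) 2
    calc h (i, j) ≤ (‖u‖ * ‖v‖) ^ 2 := hh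
      _ = f (i, j).1 * g (i, j).2 := by rw [mul_pow]
  have hne1 : Nonempty (Fin n₁) := Fin.pos_iff_nonempty.mp h1
  have hne2 : Nonempty (Fin n₂) := Fin.pos_iff_nonempty.mp h2
  have hsup : (⨆ p : Fin n₁ × Fin n₂, h p) ≤ (⨆ i, f i) * (⨆ j, g j) := by
    apply ciSup_le
    rintro ⟨i, j⟩
    calc h (i, j) ≤ f i * g j := key (i, j)
      _ ≤ (⨆ i, f i) * (⨆ j, g j) :=
          mul_le_mul (le_ciSup hfb i) (le_ciSup hgb j) (hg0 j)
            (le_trans (hf0 i) (le_ciSup hfb i))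
  have hsupf0 : 0 ≤ ⨆ i, f i :=
    le_trans (hf0 (Classical.arbitrary _)) (le_ciSup hfb _)
  have hsupg0 : 0 ≤ ⨆ j, g j :=
    le_trans (hg0 (Classical.arbitrary _)) (le_ciSup hgb _)
  have hcard : (Fintype.card (Fin n₁ × Fin n₂) : ℝ) = (n₁ : ℝ) * n₂ := by
    simp [Fintype.card_prod]
  unfold coherence
  rw [hcard]
  simp only [Fintype.card_fin]
  have hrne : (r : ℝ) ≠ 0 := Nat.cast_ne_zero.mpr hr.ne'
  have heq : ((n₁ : ℝ) / r * (⨆ i, f i)) * ((n₂ : ℝ) / r * (⨆ j, g j)) * r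
      = ((n₁ : ℝ) * n₂ / r) * ((⨆ i, f i) * (⨆ j, g j)) := by
    field_simp
  rw [heq]
  apply mul_le_mul_of_nonneg_left hsup
  positivity
end

section
/- Let 𝒳 ∈ ℝ^{n₁×n₂×n₃} with 𝒳 = [[A, B, C]] where A and B have full column rank r and C has Kruskal rank ≥ 2. For vectors u, v ∈ ℝ^{n₃}, define X_u = A·diag(C^T u)·B^T and X_v = A·diag(C^T v)·B^T. If all entries of C^T u and C^T v are nonzero and the ratios (C^T u)_ℓ/(C^T v)_ℓ are pairwise distinct for ℓ ∈ [r], then X_u X_v^† has exactly r nonzero eigenvalues, with eigenvalue (C^T u)_ℓ/(C^T v)_ℓ corresponding to eigenvector a_ℓ (the ℓ-th column of A), for each ℓ ∈ [r]. -/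
open scoped Matrix

/-- `P` is the Moore–Penrose pseudoinverse of `M`. -/
def IsMoorePenroseInv {a b : ℕ} (M : Matrix (Fin a) (Fin b) ℝ)
    (P : Matrix (Fin b) (Fin a) ℝ) : Prop :=
  M * P * M = M ∧ P * M * P = P ∧ (M * P)ᵀ = M * P ∧ (P * M)ᵀ = P * M

/-- Kruskal rank at least 2: every pair of distinct columns is linearly independent. -/
def KruskalRankGeTwo {s r : ℕ} (M : Matrix (Fin s) (Fin r) ℝ) : Prop :=
  ∀ ℓ ℓ' : Fin r, ℓ ≠ ℓ' →
    LinearIndependent ℝ ![(fun i => M i ℓ : Fin s → ℝ), (fun i => M i ℓ' : Fin s → ℝ)]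

/-- Uniqueness of the Moore–Penrose pseudoinverse. -/
lemma mp_unique {a b : ℕ} {M : Matrix (Fin a) (Fin b) ℝ}
    {P Q : Matrix (Fin b) (Fin a) ℝ}
    (hP : IsMoorePenroseInv M P) (hQ : IsMoorePenroseInv M Q) : P = Q := by
  obtain ⟨hP1, hP2, hP3, hP4⟩ := hP
  obtain ⟨hQ1, hQ2, hQ3, hQ4⟩ := hQ
  have hMP : M * P = M * Q := by
    calc M * P = (M * P)ᵀ := hP3.symm
    _ = Pᵀ * Mᵀ := Matrix.transpose_mul M P
    _ = Pᵀ * (M * Q * M)ᵀ := by rw [hQ1]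
    _ = Pᵀ * (Mᵀ * (M * Q)ᵀ) := by rw [Matrix.transpose_mul (M * Q) M]
    _ = (Pᵀ * Mᵀ) * (M * Q) := by rw [hQ3, Matrix.mul_assoc]
    _ = (M * P)ᵀ * (M * Q) := by rw [Matrix.transpose_mul M P]
    _ = (M * P) * (M * Q) := by rw [hP3]
    _ = (M * P * M) * Q := by simp only [Matrix.mul_assoc]
    _ = M * Q := by rw [hP1]
  have hPM : P * M = Q * M := by
    calc P * M = (P * M)ᵀ := hP4.symm
    _ = Mᵀ * Pᵀ := Matrix.transpose_mul P M
    _ = (M * Q * M)ᵀ * Pᵀ := by rw [hQ1]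
    _ = ((Q * M)ᵀ * Mᵀ) * Pᵀ := by
          rw [Matrix.mul_assoc M Q M, Matrix.transpose_mul M (Q * M)]
    _ = (Q * M) * (Mᵀ * Pᵀ) := by rw [hQ4, Matrix.mul_assoc]
    _ = (Q * M) * (P * M)ᵀ := by rw [Matrix.transpose_mul P M]
    _ = (Q * M) * (P * M) := by rw [hP4]
    _ = Q * (M * P * M) := by rw [Matrix.mul_assoc, Matrix.mul_assoc]
    _ = Q * M := by rw [hP1]
  calc P = P * M * P := hP2.symm
  _ = P * (M * Q) := by rw [Matrix.mul_assoc, hMP]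
  _ = (Q * M) * Q := by rw [← Matrix.mul_assoc, hPM]
  _ = Q := hQ2

/-- A square matrix of full rank is a unit. -/
lemma isUnit_of_rank_eq {r : ℕ} (M : Matrix (Fin r) (Fin r) ℝ) (h : M.rank = r) :
    IsUnit M := by
  rw [← Matrix.mulVec_surjective_iff_isUnit]
  have : LinearMap.range M.mulVecLin = ⊤ := by
    apply Submodule.eq_top_of_finrank_eq
    rw [← Matrix.rank, h]
    simp [Module.finrank_pi]
  intro y
  exact (LinearMap.range_eq_top.mp this) y

/-- Core identity of Jennrich's algorithm: with `X_u = A·diag(Cᵀu)·Bᵀ` and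
`X_v = A·diag(Cᵀv)·Bᵀ`, if all entries of `Cᵀu` and `Cᵀv` are nonzero and the ratios
`(Cᵀu)_ℓ/(Cᵀv)_ℓ` are pairwise distinct, then `X_u X_v^†` has exactly `r` nonzero eigenvalues
(it has rank `r`) and eigenvalue `(Cᵀu)_ℓ/(Cᵀv)_ℓ` with eigenvector `a_ℓ`, for each `ℓ`. -/
theorem jennrich_eigen {n₁ n₂ n₃ r : ℕ}
    (A : Matrix (Fin n₁) (Fin r) ℝ) (B : Matrix (Fin n₂) (Fin r) ℝ)
    (C : Matrix (Fin n₃) (Fin r) ℝ)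
    (hA : A.rank = r) (hB : B.rank = r) (hC : KruskalRankGeTwo C)
    (u v : Fin n₃ → ℝ)
    (hu : ∀ ℓ, (Cᵀ *ᵥ u) ℓ ≠ 0) (hv : ∀ ℓ, (Cᵀ *ᵥ v) ℓ ≠ 0)
    (hdist : ∀ ℓ ℓ' : Fin r, ℓ ≠ ℓ' →
      (Cᵀ *ᵥ u) ℓ / (Cᵀ *ᵥ v) ℓ ≠ (Cᵀ *ᵥ u) ℓ' / (Cᵀ *ᵥ v) ℓ')
    (Xu Xv : Matrix (Fin n₁) (Fin n₂) ℝ)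
    (hXu : Xu = A * Matrix.diagonal (Cᵀ *ᵥ u) * Bᵀ)
    (hXv : Xv = A * Matrix.diagonal (Cᵀ *ᵥ v) * Bᵀ)
    (Pv : Matrix (Fin n₂) (Fin n₁) ℝ) (hPv : IsMoorePenroseInv Xv Pv) :
    (Xu * Pv).rank = r ∧
      ∀ ℓ : Fin r,
        (Xu * Pv).mulVec (fun i => A i ℓ) =
          ((Cᵀ *ᵥ u) ℓ / (Cᵀ *ᵥ v) ℓ) • (fun i => A i ℓ) := by
  set du : Fin r → ℝ := Cᵀ *ᵥ u with hdu
  set dv : Fin r → ℝ := Cᵀ *ᵥ v with hdv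
  -- Gram matrices are invertible
  have hAA : IsUnit (Aᵀ * A) := isUnit_of_rank_eq _ (by rw [Matrix.rank_transpose_mul_self, hA])
  have hBB : IsUnit (Bᵀ * B) := isUnit_of_rank_eq _ (by rw [Matrix.rank_transpose_mul_self, hB])
  have hAAdet : IsUnit (Aᵀ * A).det := (Matrix.isUnit_iff_isUnit_det _).mp hAA
  have hBBdet : IsUnit (Bᵀ * B).det := (Matrix.isUnit_iff_isUnit_det _).mp hBB
  set GA : Matrix (Fin r) (Fin r) ℝ := (Aᵀ * A)⁻¹ with hGA
  set GB : Matrix (Fin r) (Fin r) ℝ := (Bᵀ * B)⁻¹ with hGB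
  have hGA1 : GA * (Aᵀ * A) = 1 := Matrix.nonsing_inv_mul _ hAAdet
  have hGA2 : (Aᵀ * A) * GA = 1 := Matrix.mul_nonsing_inv _ hAAdet
  have hGB1 : GB * (Bᵀ * B) = 1 := Matrix.nonsing_inv_mul _ hBBdet
  have hGB2 : (Bᵀ * B) * GB = 1 := Matrix.mul_nonsing_inv _ hBBdet
  -- diagonal inverses
  have hDv1 : Matrix.diagonal dv * Matrix.diagonal (fun ℓ => (dv ℓ)⁻¹) = 1 := by
    rw [Matrix.diagonal_mul_diagonal]
    have h : (fun i => dv i * (dv i)⁻¹) = fun _ => (1:ℝ) := funext fun i => mul_inv_cancel₀ (hv i)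
    rw [h, Matrix.diagonal_one]
  have hDv2 : Matrix.diagonal (fun ℓ => (dv ℓ)⁻¹) * Matrix.diagonal dv = 1 := by
    rw [Matrix.diagonal_mul_diagonal]
    have h : (fun i => (dv i)⁻¹ * dv i) = fun _ => (1:ℝ) := funext fun i => inv_mul_cancel₀ (hv i)
    rw [h, Matrix.diagonal_one]
  -- The explicit pseudoinverse
  set Q : Matrix (Fin n₂) (Fin n₁) ℝ :=
    B * GB * Matrix.diagonal (fun ℓ => (dv ℓ)⁻¹) * GA * Aᵀ with hQ
  have hXvQ : Xv * Q = A * GA * Aᵀ := by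
    rw [hXv, hQ]
    calc A * Matrix.diagonal dv * Bᵀ * (B * GB * Matrix.diagonal (fun ℓ => (dv ℓ)⁻¹) * GA * Aᵀ)
        = A * Matrix.diagonal dv * ((Bᵀ * B) * GB) * Matrix.diagonal (fun ℓ => (dv ℓ)⁻¹) * GA * Aᵀ := by
          simp only [Matrix.mul_assoc]
    _ = A * (Matrix.diagonal dv * Matrix.diagonal (fun ℓ => (dv ℓ)⁻¹)) * GA * Aᵀ := by
          rw [hGB2]; simp only [Matrix.mul_one, Matrix.mul_assoc]
    _ = A * GA * Aᵀ := by rw [hDv1]; simp only [Matrix.mul_one, Matrix.mul_assoc]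
  have hQXv : Q * Xv = B * GB * Bᵀ := by
    rw [hXv, hQ]
    calc B * GB * Matrix.diagonal (fun ℓ => (dv ℓ)⁻¹) * GA * Aᵀ * (A * Matrix.diagonal dv * Bᵀ)
        = B * GB * Matrix.diagonal (fun ℓ => (dv ℓ)⁻¹) * (GA * (Aᵀ * A)) * Matrix.diagonal dv * Bᵀ := by
          simp only [Matrix.mul_assoc]
    _ = B * GB * (Matrix.diagonal (fun ℓ => (dv ℓ)⁻¹) * Matrix.diagonal dv) * Bᵀ := by
          rw [hGA1]; simp only [Matrix.mul_one, Matrix.mul_assoc]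
    _ = B * GB * Bᵀ := by rw [hDv2]; simp only [Matrix.mul_one, Matrix.mul_assoc]
  have hQmp : IsMoorePenroseInv Xv Q := by
    refine ⟨?_, ?_, ?_, ?_⟩
    · rw [hXvQ, hXv]
      calc A * GA * Aᵀ * (A * Matrix.diagonal dv * Bᵀ)
          = A * (GA * (Aᵀ * A)) * Matrix.diagonal dv * Bᵀ := by simp only [Matrix.mul_assoc]
      _ = A * Matrix.diagonal dv * Bᵀ := by rw [hGA1]; simp only [Matrix.mul_one, Matrix.mul_assoc]
    · rw [hQXv, hQ]
      calc B * GB * Bᵀ * (B * GB * Matrix.diagonal (fun ℓ => (dv ℓ)⁻¹) * GA * Aᵀ)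
          = B * GB * ((Bᵀ * B) * GB) * Matrix.diagonal (fun ℓ => (dv ℓ)⁻¹) * GA * Aᵀ := by
            simp only [Matrix.mul_assoc]
      _ = B * GB * Matrix.diagonal (fun ℓ => (dv ℓ)⁻¹) * GA * Aᵀ := by
            rw [hGB2]; simp only [Matrix.mul_one, Matrix.mul_assoc]
    · rw [hXvQ]
      have hsym : GAᵀ = GA := by
        rw [hGA, Matrix.transpose_nonsing_inv]
        congr 1
        rw [Matrix.transpose_mul, Matrix.transpose_transpose]
      rw [Matrix.transpose_mul, Matrix.transpose_mul, Matrix.transpose_transpose, hsym,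
        Matrix.mul_assoc]
    · rw [hQXv]
      have hsym : GBᵀ = GB := by
        rw [hGB, Matrix.transpose_nonsing_inv]
        congr 1
        rw [Matrix.transpose_mul, Matrix.transpose_transpose]
      rw [Matrix.transpose_mul, Matrix.transpose_mul, Matrix.transpose_transpose, hsym,
        Matrix.mul_assoc]
  have hPvQ : Pv = Q := mp_unique hPv hQmp
  -- Key product formula
  have hprod : Xu * Pv = A * (Matrix.diagonal du * Matrix.diagonal (fun ℓ => (dv ℓ)⁻¹) * GA) * Aᵀ := by
    rw [hPvQ, hXu, hQ]
    calc A * Matrix.diagonal du * Bᵀ * (B * GB * Matrix.diagonal (fun ℓ => (dv ℓ)⁻¹) * GA * Aᵀ)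
        = A * Matrix.diagonal du * ((Bᵀ * B) * GB) * Matrix.diagonal (fun ℓ => (dv ℓ)⁻¹) * GA * Aᵀ := by
          simp only [Matrix.mul_assoc]
    _ = A * (Matrix.diagonal du * Matrix.diagonal (fun ℓ => (dv ℓ)⁻¹) * GA) * Aᵀ := by
          rw [hGB2]; simp only [Matrix.mul_one, Matrix.mul_assoc]
  have hratio : Xu * Pv * A = A * Matrix.diagonal (fun ℓ => du ℓ * (dv ℓ)⁻¹) := by
    rw [hprod]
    calc A * (Matrix.diagonal du * Matrix.diagonal (fun ℓ => (dv ℓ)⁻¹) * GA) * Aᵀ * A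
        = A * (Matrix.diagonal du * Matrix.diagonal (fun ℓ => (dv ℓ)⁻¹)) * (GA * (Aᵀ * A)) := by
          simp only [Matrix.mul_assoc]
    _ = A * (Matrix.diagonal du * Matrix.diagonal (fun ℓ => (dv ℓ)⁻¹)) := by
          rw [hGA1, Matrix.mul_one]
    _ = A * Matrix.diagonal (fun ℓ => du ℓ * (dv ℓ)⁻¹) := by rw [Matrix.diagonal_mul_diagonal]
  constructor
  · -- rank
    have hdet : IsUnit (Matrix.diagonal (fun ℓ => du ℓ * (dv ℓ)⁻¹)).det := by
      rw [Matrix.det_diagonal]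
      exact isUnit_iff_ne_zero.mpr (Finset.prod_ne_zero_iff.mpr fun ℓ _ =>
        mul_ne_zero (hu ℓ) (inv_ne_zero (hv ℓ)))
    have hge : r ≤ (Xu * Pv).rank := by
      have h1 : (Xu * Pv * A).rank ≤ (Xu * Pv).rank := Matrix.rank_mul_le_left _ _
      rw [hratio, Matrix.rank_mul_eq_left_of_isUnit_det _ _ hdet, hA] at h1
      exact h1
    have hle : (Xu * Pv).rank ≤ r := by
      have h1 : (Xu * Pv).rank ≤ Aᵀ.rank := by
        rw [hprod]; exact Matrix.rank_mul_le_right _ _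
      rw [Matrix.rank_transpose, hA] at h1
      exact h1
    omega
  · -- eigenvectors
    intro ℓ
    have hcol : (fun i => A i ℓ) = A *ᵥ Pi.single ℓ 1 := by
      funext i; simp [Matrix.mulVec_single]
    rw [hcol, Matrix.mulVec_mulVec, hratio, ← Matrix.mulVec_mulVec,
      Matrix.diagonal_mulVec_single]
    funext j
    simp only [Matrix.mulVec_single, Pi.smul_apply, smul_eq_mul, op_smul_eq_mul, mul_one, div_eq_mul_inv]
    ring
end
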